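/- arXiv:1012.5329 — 2 statements merged into one kernel-verified Lean document; each statement's English description precedes it below -/
import Mathlib

section
/- Let I = I(G) be the edge ideal of a finite simple graph G, and suppose a ∈ I/I^2 is a (homogeneous degree-one) regular element of the associated graded ring gr_I(R) = ⊕_{t≥0} I^t/I^{t+1}. Then the sets Ass(R/I^t) form an ascending chain: Ass(R/I^t) ⊂ Ass(R/I^{t+1}) for all t ≥ 1, and moreover Ass(R/I^t) = Ass(I^{t-1}/I^t) for all t ≥ 1. -/
open MvPolynomial

/-- The edge ideal of a (simple) graph, in `K[x_v : v ∈ V]`. -/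
noncomputable def graphIdeal (K : Type) [Field K] {V : Type} (G : SimpleGraph V) :
    Ideal (MvPolynomial V K) :=
  Ideal.span { m : MvPolynomial V K | ∃ u v : V, G.Adj u v ∧ m = X u * X v }

/-!
Multiplication by `e` maps `Iᵗ/Iᵗ⁺¹` to `Iᵗ⁺¹/Iᵗ⁺²` and `R/Iᵗ` to `R/Iᵗ⁺¹`; regularity of the
initial form of `e` in `gr_I(R)` makes both maps injective, which gives `Ass(R/Iᵗ) ⊆ Ass(R/Iᵗ⁺¹)`.
For the equality, `0 → Iᵗ/Iᵗ⁺¹ → R/Iᵗ⁺¹ → R/Iᵗ → 0` puts an associated prime of `R/Iᵗ⁺¹` either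
in `Ass(Iᵗ/Iᵗ⁺¹)` or in `Ass(R/Iᵗ)`, and by induction and the first injection
`Ass(R/Iᵗ) ⊆ Ass(Iᵗ⁻¹/Iᵗ) ⊆ Ass(Iᵗ/Iᵗ⁺¹)`.
-/

namespace Ideal

variable {R : Type*} [CommRing R] {I : Ideal R} {e : R}

/-- The piece `Iˢ/Iˢ⁺¹` of `gr_I(R)`, as a submodule of `R/Iˢ⁺¹`. -/
abbrev gradedPiece (I : Ideal R) (s : ℕ) : Submodule R (R ⧸ I ^ (s + 1)) :=
  Submodule.map (Submodule.mkQ (I ^ (s + 1))) (I ^ s)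

lemma mul_mem_pow_succ (he : e ∈ I) {t : ℕ} {x : R} (hx : x ∈ I ^ t) : e * x ∈ I ^ (t + 1) := by
  rw [pow_succ']
  exact Submodule.mul_mem_mul he hx

lemma mem_pow_of_mul_mem_pow_succ
    (hreg : ∀ (t : ℕ) (f : R), f ∈ I ^ t → f * e ∈ I ^ (t + 2) → f ∈ I ^ (t + 1))
    {t : ℕ} {f : R} (hfe : f * e ∈ I ^ (t + 1)) : f ∈ I ^ t := by
  suffices ∀ s ≤ t, f ∈ I ^ s from this t le_rfl
  intro s
  induction s with
  | zero => simp
  | succ s ih =>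
    intro hst
    exact hreg s f (ih (by omega)) (pow_le_pow_right (by omega) hfe)

noncomputable def quotPowMul (he : e ∈ I) (t : ℕ) : (R ⧸ I ^ t) →ₗ[R] (R ⧸ I ^ (t + 1)) :=
  Submodule.mapQ _ _ (LinearMap.mulLeft R e) fun _ hx => mul_mem_pow_succ he hx

lemma quotPowMul_mk (he : e ∈ I) (t : ℕ) (x : R) :
    quotPowMul he t (Submodule.mkQ _ x) = Submodule.mkQ _ (e * x) :=
  rfl

lemma quotPowMul_injective (he : e ∈ I)
    (hreg : ∀ (t : ℕ) (f : R), f ∈ I ^ t → f * e ∈ I ^ (t + 2) → f ∈ I ^ (t + 1))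
    (t : ℕ) : Function.Injective (quotPowMul he t) := by
  rw [← LinearMap.ker_eq_bot, eq_bot_iff]
  intro q hq
  obtain ⟨x, rfl⟩ := Submodule.mkQ_surjective _ q
  rw [LinearMap.mem_ker, quotPowMul_mk, Submodule.mkQ_apply, Submodule.Quotient.mk_eq_zero] at hq
  rw [Submodule.mem_bot, Submodule.mkQ_apply, Submodule.Quotient.mk_eq_zero]
  exact mem_pow_of_mul_mem_pow_succ hreg (by rwa [mul_comm])

lemma quotPowMul_mapsTo_gradedPiece (he : e ∈ I) (s : ℕ) :
    ∀ x ∈ I.gradedPiece s, quotPowMul he (s + 1) x ∈ I.gradedPiece (s + 1) := by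
  rintro _ ⟨y, hy, rfl⟩
  exact ⟨e * y, mul_mem_pow_succ he hy, rfl⟩

lemma associatedPrimes_quotient_pow_succ_subset_gradedPiece (he : e ∈ I)
    (hreg : ∀ (t : ℕ) (f : R), f ∈ I ^ t → f * e ∈ I ^ (t + 2) → f ∈ I ^ (t + 1))
    (s : ℕ) : associatedPrimes R (R ⧸ I ^ (s + 1)) ⊆ associatedPrimes R (I.gradedPiece s) := by
  induction s with
  | zero =>
    have htop : I.gradedPiece 0 = ⊤ := by simp
    rw [htop]
    exact associatedPrimes.subset_of_injective Submodule.topEquiv.symm.injective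
  | succ s ih =>
    intro P hP
    rcases associatedPrimes.subset_union_of_exact (Submodule.injective_subtype _)
      (LinearMap.exact_subtype_mkQ (I.gradedPiece (s + 1))) hP with hsub | hquot
    · exact hsub
    · have hle : I ^ (s + 1 + 1) ≤ I ^ (s + 1) := pow_le_pow_right (by omega)
      let quotEquiv := Submodule.quotientQuotientEquivQuotient _ _ hle
      have hP' : P ∈ associatedPrimes R (I.gradedPiece s) :=
        ih (associatedPrimes.subset_of_injective quotEquiv.injective hquot)
      let mulPiece := (quotPowMul he (s + 1)).restrict (quotPowMul_mapsTo_gradedPiece he s)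
      have hinj : Function.Injective mulPiece := fun a b hab =>
        Subtype.ext (quotPowMul_injective he hreg (s + 1) (congrArg Subtype.val hab))
      exact associatedPrimes.subset_of_injective hinj hP'

end Ideal

theorem stmt_18_general (K : Type) [Field K] {n : ℕ}
    (I : Ideal (MvPolynomial (Fin n) K))
    (e : MvPolynomial (Fin n) K) (he : e ∈ I)
    (hreg : ∀ (t : ℕ) (f : MvPolynomial (Fin n) K),
      f ∈ I ^ t → f * e ∈ I ^ (t + 2) → f ∈ I ^ (t + 1)) :
    (∀ t : ℕ, 1 ≤ t →
      associatedPrimes (MvPolynomial (Fin n) K) (MvPolynomial (Fin n) K ⧸ I ^ t) ⊆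
      associatedPrimes (MvPolynomial (Fin n) K)
        (MvPolynomial (Fin n) K ⧸ I ^ (t + 1))) ∧
    (∀ t : ℕ, 1 ≤ t →
      associatedPrimes (MvPolynomial (Fin n) K) (MvPolynomial (Fin n) K ⧸ I ^ t) =
      associatedPrimes (MvPolynomial (Fin n) K)
        ↥(Submodule.map (Submodule.mkQ (I ^ t : Ideal (MvPolynomial (Fin n) K)))
          (I ^ (t - 1) : Ideal (MvPolynomial (Fin n) K)))) := by
  refine ⟨fun t _ => associatedPrimes.subset_of_injective (Ideal.quotPowMul_injective he hreg t),
    fun t ht => ?_⟩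
  obtain ⟨s, rfl⟩ := Nat.exists_eq_add_of_le' ht
  exact le_antisymm (Ideal.associatedPrimes_quotient_pow_succ_subset_gradedPiece he hreg s)
    (associatedPrimes.subset_of_injective (Submodule.injective_subtype _))

/-- Let `I = I(G)` be the edge ideal of a graph and suppose some
`a ∈ I/I²` (represented by `e ∈ I`) is a regular element of the associated graded ring
`gr_I(R) = ⊕ Iᵗ/Iᵗ⁺¹`, i.e. for all `t`, `f ∈ Iᵗ` and `f·e ∈ Iᵗ⁺²` imply `f ∈ Iᵗ⁺¹`.
Then `Ass(R/Iᵗ) ⊆ Ass(R/Iᵗ⁺¹)` for all `t ≥ 1`, and moreover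
`Ass(R/Iᵗ) = Ass(Iᵗ⁻¹/Iᵗ)` for all `t ≥ 1`. -/
theorem stmt_18 (K : Type) [Field K] {n : ℕ} (G : SimpleGraph (Fin n))
    (I : Ideal (MvPolynomial (Fin n) K)) (hI : I = graphIdeal K G)
    (e : MvPolynomial (Fin n) K) (he : e ∈ I)
    (hreg : ∀ (t : ℕ) (f : MvPolynomial (Fin n) K),
      f ∈ I ^ t → f * e ∈ I ^ (t + 2) → f ∈ I ^ (t + 1)) :
    (∀ t : ℕ, 1 ≤ t →
      associatedPrimes (MvPolynomial (Fin n) K) (MvPolynomial (Fin n) K ⧸ I ^ t) ⊆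
      associatedPrimes (MvPolynomial (Fin n) K)
        (MvPolynomial (Fin n) K ⧸ I ^ (t + 1))) ∧
    (∀ t : ℕ, 1 ≤ t →
      associatedPrimes (MvPolynomial (Fin n) K) (MvPolynomial (Fin n) K ⧸ I ^ t) =
      associatedPrimes (MvPolynomial (Fin n) K)
        ↥(Submodule.map (Submodule.mkQ (I ^ t : Ideal (MvPolynomial (Fin n) K)))
          (I ^ (t - 1) : Ideal (MvPolynomial (Fin n) K)))) :=
  stmt_18_general K I e he hreg
end

section
/- Let G be a finite simple graph containing a leaf (a vertex of degree one) and let I = I(G) be its edge ideal in R = K[x_1,...,x_n]. Then Ass(R/I^t) ⊂ Ass(R/I^{t+1}) for all t ≥ 1; that is, the sets of associated primes of the powers of I form an ascending chain. -/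
/-!
For the leaf edge `e = x_v x_u` one has `(I^(t+1) : e) = I^t`, and whenever `(J : e) = I` every
annihilator `(I : c)` equals `(J : c e)`, so `Ass(R/I) ⊆ Ass(R/J)`. The colon identity is a
statement about monomials: if a product of `t + 1` edges divides `ξ x_v x_u`, then removing a
suitable edge (the leaf edge if it occurs, otherwise an edge through `u` if there is one,
otherwise any edge) leaves a product of `t` edges dividing `ξ`.
-/

open MvPolynomial

open Pointwise

theorem associatedPrimes_quotient_subset_of_colon_eq {R : Type*} [CommRing R] {I J : Ideal R}
    {e : R} (h : J.colon {e} = I) :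
    associatedPrimes R (R ⧸ I) ⊆ associatedPrimes R (R ⧸ J) := by
  rintro P ⟨hP, x, rfl⟩
  obtain ⟨c, rfl⟩ := Ideal.Quotient.mk_surjective x
  refine ⟨hP, Ideal.Quotient.mk J (c * e), ?_⟩
  congr 1
  ext r
  simp only [Submodule.mem_colon_singleton, Submodule.mem_bot]
  change Ideal.Quotient.mk I (r * c) = 0 ↔ Ideal.Quotient.mk J (r * (c * e)) = 0
  rw [Ideal.Quotient.eq_zero_iff_mem, Ideal.Quotient.eq_zero_iff_mem, ← h,
    Submodule.mem_colon_singleton, smul_eq_mul, mul_assoc]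

theorem Finsupp.le_add_erase_of_le_add {α : Type*} {d ξ y : α →₀ ℕ} {a : α}
    (h : d ≤ ξ + y) (ha : d a = 0) : d ≤ ξ + y.erase a := by
  intro w
  by_cases hw : w = a
  · simp [hw, ha]
  · simpa [Finsupp.erase_ne hw] using h w

section EdgeIdeal

variable {V : Type} {G : SimpleGraph V} {v u : V}

noncomputable def edgeExponent (a b : V) : V →₀ ℕ := Finsupp.single a 1 + Finsupp.single b 1

variable (G) in
def edgeExponents : Set (V →₀ ℕ) := {d | ∃ a b, G.Adj a b ∧ d = edgeExponent a b}

theorem eq_edgeExponent_of_neighborSet_eq (hleaf : G.neighborSet v = {u}) {x : V →₀ ℕ}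
    (hx : x ∈ edgeExponents G) (hxv : x v ≠ 0) : x = edgeExponent v u := by
  obtain ⟨a, b, hab, rfl⟩ := hx
  have hnbr : ∀ w, G.Adj v w → w = u := fun w hw => by
    simpa [hleaf] using (SimpleGraph.mem_neighborSet G v w).2 hw
  by_cases ha : a = v
  · subst ha
    rw [hnbr b hab]
  · have hb : b = v := by
      by_contra hb
      simp [edgeExponent, Ne.symm ha, Ne.symm hb] at hxv
    subst hb
    rw [hnbr a hab.symm, edgeExponent, edgeExponent, add_comm]

theorem exists_sum_le_add_of_neighborSet_eq (hleaf : G.neighborSet v = {u}) {ι : Type*}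
    [Fintype ι] [Nonempty ι] {f : ι → V →₀ ℕ} (hf : ∀ i, f i ∈ edgeExponents G)
    {ξ : V →₀ ℕ} (hle : ∑ i, f i ≤ ξ + edgeExponent v u) : ∃ i, ∑ j, f j ≤ ξ + f i := by
  have hvu : v ≠ u := (G.mem_neighborSet v u).1 (hleaf ▸ rfl) |>.ne
  have hsupp : ∀ w, (∑ i, f i) w ≠ 0 → ∃ i, f i w ≠ 0 := fun w hw => by
    rw [Finsupp.finsetSum_apply] at hw
    simpa using Finset.exists_ne_zero_of_sum_ne_zero hw
  by_cases hv : (∑ i, f i) v = 0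
  · -- no edge of the sum meets the leaf `v`, so only the factor `x_u` of `x_v x_u` can help
    have hle_u : ∑ i, f i ≤ ξ + Finsupp.single u 1 := by
      simpa [edgeExponent, Finsupp.erase_add, Finsupp.erase_single_ne hvu]
        using Finsupp.le_add_erase_of_le_add hle hv
    by_cases hu : (∑ i, f i) u = 0
    · obtain ⟨i⟩ := ‹Nonempty ι›
      refine ⟨i, le_trans ?_ le_self_add⟩
      simpa using Finsupp.le_add_erase_of_le_add hle_u hu
    · obtain ⟨i, hi⟩ := hsupp u hu
      have hui : Finsupp.single u 1 ≤ f i := Finsupp.single_le_iff.2 (Nat.one_le_iff_ne_zero.2 hi)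
      exact ⟨i, hle_u.trans (add_le_add le_rfl hui)⟩
  · obtain ⟨i, hi⟩ := hsupp v hv
    exact ⟨i, eq_edgeExponent_of_neighborSet_eq hleaf (hf i) hi ▸ hle⟩

theorem exists_mem_nsmul_edgeExponents_le (hleaf : G.neighborSet v = {u}) {t : ℕ}
    {d ξ : V →₀ ℕ} (hd : d ∈ (t + 1) • edgeExponents G) (hle : d ≤ ξ + edgeExponent v u) :
    ∃ d' ∈ t • edgeExponents G, d' ≤ ξ := by
  obtain ⟨f, rfl⟩ := Set.mem_nsmul.1 hd
  rw [List.sum_ofFn] at hle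
  obtain ⟨i, hi⟩ := exists_sum_le_add_of_neighborSet_eq hleaf (fun i => (f i).2) hle
  refine ⟨∑ j, f (i.succAbove j), Set.mem_nsmul.2 ⟨fun j => f (i.succAbove j), List.sum_ofFn⟩, ?_⟩
  rw [Fin.sum_univ_succAbove _ i, add_comm] at hi
  exact le_of_add_le_add_right hi

variable (K : Type) [Field K]

theorem X_mul_X_eq_monomial_edgeExponent (a b : V) :
    (X a * X b : MvPolynomial V K) = monomial (edgeExponent a b) 1 := by
  rw [X, X, monomial_mul, one_mul, edgeExponent]

theorem graphIdeal_eq_span_monomial :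
    graphIdeal K G = Ideal.span ((fun d => monomial d (1 : K)) '' edgeExponents G) := by
  rw [graphIdeal]
  congr 1
  ext p
  simp only [edgeExponents, Set.mem_image, X_mul_X_eq_monomial_edgeExponent]
  grind

theorem graphIdeal_pow_eq_span_monomial (t : ℕ) :
    graphIdeal K G ^ t = Ideal.span ((fun d => monomial d (1 : K)) '' (t • edgeExponents G)) := by
  rw [graphIdeal_eq_span_monomial, Ideal.span, Submodule.span_pow]
  congr 1
  induction t with
  | zero => simp [Set.singleton_one]
  | succ t ih =>
    rw [pow_succ, succ_nsmul, ih, ← Set.image2_add, ← Set.image2_mul, Set.image_image2_distrib]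
    intro a b
    rw [monomial_mul, one_mul]

theorem graphIdeal_pow_succ_colon_of_neighborSet_eq (hleaf : G.neighborSet v = {u}) (t : ℕ) :
    (graphIdeal K G ^ (t + 1)).colon {X v * X u} = graphIdeal K G ^ t := by
  ext f
  rw [Submodule.mem_colon_singleton, smul_eq_mul]
  constructor
  · simp only [graphIdeal_pow_eq_span_monomial, mem_ideal_span_monomial_image]
    intro hf ξ hξ
    refine (hf (ξ + edgeExponent v u) ?_).elim
      fun d ⟨hd, hle⟩ => exists_mem_nsmul_edgeExponents_le hleaf hd hle
    rw [X_mul_X_eq_monomial_edgeExponent, mem_support_iff, coeff_mul_monomial, mul_one]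
    exact mem_support_iff.1 hξ
  · intro hf
    have hadj : G.Adj v u := (G.mem_neighborSet v u).1 (hleaf ▸ rfl)
    rw [pow_succ]
    exact Ideal.mul_mem_mul hf (Ideal.subset_span ⟨v, u, hadj, rfl⟩)

end EdgeIdeal

/-- If a graph `G` has a leaf (a vertex of degree one), then the sets
of associated primes of the powers of the edge ideal `I = I(G)` form an ascending chain:
`Ass(R/Iᵗ) ⊆ Ass(R/Iᵗ⁺¹)` for all `t ≥ 1`. -/
theorem stmt_19 (K : Type) [Field K] {n : ℕ} (G : SimpleGraph (Fin n))
    (v u : Fin n) (hleaf : G.neighborSet v = {u}) :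
    ∀ t : ℕ, 1 ≤ t →
      associatedPrimes (MvPolynomial (Fin n) K)
          (MvPolynomial (Fin n) K ⧸ (graphIdeal K G) ^ t) ⊆
      associatedPrimes (MvPolynomial (Fin n) K)
          (MvPolynomial (Fin n) K ⧸ (graphIdeal K G) ^ (t + 1)) := fun t _ =>
  associatedPrimes_quotient_subset_of_colon_eq
    (graphIdeal_pow_succ_colon_of_neighborSet_eq K hleaf t)
end
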